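/- arXiv:1501.02587 — 11 statements merged into one kernel-verified Lean document; each statement's English description precedes it below -/
import Mathlib

section
/- Let J be a finite index set, let f_i ∈ ℝ³ and f_j ∈ ℝ³ for j ∈ J with f_j ≠ f_i for every j, and let τ : J → ℝ³. Then the three conditions (1) ∑_{j∈J} τ_j = 0, (2) (f_j − f_i) × τ_j = 0 for all j ∈ J, and (3) ∑_{j∈J} ⟨f_j − f_i, τ_j⟩ = 0 hold simultaneously if and only if there exists k : J → ℝ such that τ_j = k_j (f_j − f_i) for all j ∈ J, ∑_{j∈J} k_j (f_j − f_i) = 0, and ∑_{j∈J} k_j (‖f_j‖² − ‖f_i‖²) = 0. -/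
open scoped RealInnerProductSpace
open Matrix

lemma cross_eq_zero_iff {v w : EuclideanSpace ℝ (Fin 3)} (hv : v ≠ 0) :
    (WithLp.equiv 2 (Fin 3 → ℝ)).symm
      ![v 1 * w 2 - v 2 * w 1, v 2 * w 0 - v 0 * w 2, v 0 * w 1 - v 1 * w 0] = 0
    ↔ ∃ k : ℝ, w = k • v := by
  constructor
  · intro h
    have h' : crossProduct (WithLp.equiv 2 (Fin 3 → ℝ) v) (WithLp.equiv 2 (Fin 3 → ℝ) w) = 0 := by
      have := congrArg (WithLp.equiv 2 (Fin 3 → ℝ)) h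
      simpa [cross_apply] using this
    have hnli : ¬ LinearIndependent ℝ ![(WithLp.equiv 2 (Fin 3 → ℝ) v),
        (WithLp.equiv 2 (Fin 3 → ℝ) w)] := by
      intro hli
      exact (crossProduct_ne_zero_iff_linearIndependent.mpr hli) h'
    rw [LinearIndependent.pair_iff] at hnli
    push_neg at hnli
    obtain ⟨a, b, hab, hne⟩ := hnli
    rcases eq_or_ne b 0 with hb | hb
    · exfalso
      have ha : a ≠ 0 := fun h0 => hne h0 hb
      have hv0 : (WithLp.equiv 2 (Fin 3 → ℝ)) v = 0 := by
        have : a • (WithLp.equiv 2 (Fin 3 → ℝ)) v = 0 := by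
          simpa [hb] using hab
        rcases smul_eq_zero.mp this with h | h
        · exact absurd h ha
        · exact h
      apply hv
      ext i
      simpa using congrFun hv0 i
    · refine ⟨-a / b, ?_⟩
      have : a • v + b • w = 0 := by
        ext i
        have := congrFun hab i
        simpa using this
      have hw : b • w = -(a • v) := by linear_combination (norm := module) this
      apply smul_right_injective _ hb
      show b • w = b • ((-a / b) • v)
      rw [hw, smul_smul]
      have hbb : b * (-a / b) = -a := by field_simp
      rw [hbb, neg_smul]
  · rintro ⟨k, rfl⟩
    ext i
    fin_cases i <;> simp <;> ring

lemma norm_sub_sq_aux (fi x : EuclideanSpace ℝ (Fin 3)) :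
    ‖x‖ ^ 2 - ‖fi‖ ^ 2 = ‖x - fi‖ ^ 2 + 2 * ⟪fi, x - fi⟫ := by
  have h := @norm_sub_sq_real (EuclideanSpace ℝ (Fin 3)) _ _ x fi
  have h2 : ⟪fi, x - fi⟫ = ⟪fi, x⟫ - ‖fi‖ ^ 2 := by
    rw [inner_sub_right, real_inner_self_eq_norm_sq]
  rw [h, h2, real_inner_comm]
  ring

/-- The cross product on Euclidean three-space. -/
noncomputable def cross (x y : EuclideanSpace ℝ (Fin 3)) : EuclideanSpace ℝ (Fin 3) :=
  (WithLp.equiv 2 (Fin 3 → ℝ)).symm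
    ![x 1 * y 2 - x 2 * y 1, x 2 * y 0 - x 0 * y 2, x 0 * y 1 - x 1 * y 0]

/-- The per-vertex conditions of Definition 1.1 (closedness, parallelism
to the edges, and vanishing of the weighted sum of inner products) hold iff the
dual 1-form is of the form `τ_j = k_j (f_j − f_i)` with `∑ k_j (f_j − f_i) = 0` and
`∑ k_j (‖f_j‖² − ‖f_i‖²) = 0`. -/
theorem stmt_1 {J : Type*} [Fintype J]
    (fi : EuclideanSpace ℝ (Fin 3)) (f : J → EuclideanSpace ℝ (Fin 3))
    (hf : ∀ j, f j ≠ fi) (τ : J → EuclideanSpace ℝ (Fin 3)) :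
    ((∑ j, τ j = 0) ∧ (∀ j, cross (f j - fi) (τ j) = 0) ∧
      (∑ j, ⟪f j - fi, τ j⟫ = 0))
    ↔ ∃ k : J → ℝ, (∀ j, τ j = k j • (f j - fi)) ∧
        (∑ j, k j • (f j - fi) = 0) ∧
        (∑ j, k j * (‖f j‖ ^ 2 - ‖fi‖ ^ 2) = 0) := by
  have hv : ∀ j, f j - fi ≠ 0 := fun j => sub_ne_zero.mpr (hf j)
  have key : ∀ (k : J → ℝ), (∑ j, k j • (f j - fi) = 0) →
      ∑ j, k j * (‖f j‖ ^ 2 - ‖fi‖ ^ 2) = ∑ j, k j * ‖f j - fi‖ ^ 2 := by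
    intro k hk
    have h1 : ∑ j, k j * ⟪fi, f j - fi⟫ = 0 := by
      have : ∑ j, k j * ⟪fi, f j - fi⟫ = ⟪fi, ∑ j, k j • (f j - fi)⟫ := by
        rw [inner_sum]
        exact Finset.sum_congr rfl fun j _ => by rw [real_inner_smul_right]
      rw [this, hk, inner_zero_right]
    calc ∑ j, k j * (‖f j‖ ^ 2 - ‖fi‖ ^ 2)
        = ∑ j, (k j * ‖f j - fi‖ ^ 2 + 2 * (k j * ⟪fi, f j - fi⟫)) := by
          refine Finset.sum_congr rfl fun j _ => ?_
          rw [norm_sub_sq_aux]; ring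
      _ = ∑ j, k j * ‖f j - fi‖ ^ 2 + 2 * ∑ j, k j * ⟪fi, f j - fi⟫ := by
          rw [Finset.sum_add_distrib, ← Finset.mul_sum]
      _ = ∑ j, k j * ‖f j - fi‖ ^ 2 := by rw [h1]; ring
  constructor
  · rintro ⟨h1, h2, h3⟩
    have hk : ∀ j, ∃ k : ℝ, τ j = k • (f j - fi) := fun j =>
      (cross_eq_zero_iff (hv j)).mp (h2 j)
    choose k hkk using hk
    refine ⟨k, hkk, ?_, ?_⟩
    · rw [← h1]; exact (Finset.sum_congr rfl fun j _ => (hkk j).symm)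
    · have hsum : ∑ j, k j • (f j - fi) = 0 := by
        rw [← h1]; exact (Finset.sum_congr rfl fun j _ => (hkk j).symm)
      rw [key k hsum, ← h3]
      refine Finset.sum_congr rfl fun j _ => ?_
      rw [hkk j, real_inner_smul_right, real_inner_self_eq_norm_sq]
  · rintro ⟨k, hτ, h2, h3⟩
    refine ⟨?_, fun j => ?_, ?_⟩
    · rw [← h2]; exact Finset.sum_congr rfl fun j _ => hτ j
    · rw [hτ j]
      exact (cross_eq_zero_iff (hv j)).mpr ⟨k j, rfl⟩
    · rw [key k h2] at h3
      rw [← h3]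
      refine Finset.sum_congr rfl fun j _ => ?_
      rw [hτ j, real_inner_smul_right, real_inner_self_eq_norm_sq]
end

section
/- Let J be a finite index set, let f_i ∈ ℝ³ and f_j ∈ ℝ³ for j ∈ J, all nonzero, and let k : J → ℝ. For a nonzero x ∈ ℝ³ write x⁻¹ := −x/‖x‖² (minus the inversion in the unit sphere). If ∑_{j∈J} k_j (f_j − f_i) = 0 and ∑_{j∈J} k_j (‖f_j‖² − ‖f_i‖²) = 0, then ∑_{j∈J} k_j ‖f_i‖² ‖f_j‖² (f_j⁻¹ − f_i⁻¹) = 0. -/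
/-! Multiplying the inverted positions by `‖f_i‖²‖f_j‖²` turns `f_j⁻¹ − f_i⁻¹` into
`‖f_j‖² f_i − ‖f_i‖² f_j`, a combination of `f_j − f_i` and `(‖f_j‖² − ‖f_i‖²) f_i`;
the two closedness hypotheses kill the two parts separately. -/

open scoped RealInnerProductSpace

/-- Minus the inversion in the unit sphere: `x ↦ −x/‖x‖²`. -/
noncomputable def sphInv (x : EuclideanSpace ℝ (Fin 3)) : EuclideanSpace ℝ (Fin 3) :=
  -(‖x‖ ^ 2)⁻¹ • x

theorem Finset.sum_smul_smul_sub_smul_eq_zero {R ι M : Type*} [CommRing R] [AddCommGroup M]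
    [Module R M] (s : Finset ι) (k a : ι → R) (a₀ : R) (v : ι → M) (x : M)
    (hv : ∑ j ∈ s, k j • (v j - x) = 0) (ha : ∑ j ∈ s, k j * (a j - a₀) = 0) :
    ∑ j ∈ s, k j • (a j • x - a₀ • v j) = 0 := by
  have hsplit : ∀ j,
      k j • (a j • x - a₀ • v j) = -(a₀ • k j • (v j - x)) + (k j * (a j - a₀)) • x :=
    fun j => by module
  rw [Finset.sum_congr rfl fun j _ => hsplit j, Finset.sum_add_distrib, Finset.sum_neg_distrib,
    ← Finset.smul_sum, ← Finset.sum_smul, hv, ha]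
  simp

theorem sq_norm_smul_sphInv (x : EuclideanSpace ℝ (Fin 3)) : ‖x‖ ^ 2 • sphInv x = -x := by
  rcases eq_or_ne x 0 with rfl | hx
  · simp [sphInv]
  · rw [sphInv, smul_smul, mul_neg, mul_inv_cancel₀ (by positivity), neg_one_smul]

theorem smul_sphInv_sub_sphInv (x y : EuclideanSpace ℝ (Fin 3)) :
    (‖x‖ ^ 2 * ‖y‖ ^ 2) • (sphInv y - sphInv x) = ‖y‖ ^ 2 • x - ‖x‖ ^ 2 • y := by
  rw [smul_sub, mul_smul, sq_norm_smul_sphInv, mul_comm, mul_smul, sq_norm_smul_sphInv]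
  module

theorem stmt_2_general {J : Type*} [Fintype J]
    (fi : EuclideanSpace ℝ (Fin 3)) (f : J → EuclideanSpace ℝ (Fin 3))
    (k : J → ℝ)
    (h1 : ∑ j, k j • (f j - fi) = 0)
    (h2 : ∑ j, k j * (‖f j‖ ^ 2 - ‖fi‖ ^ 2) = 0) :
    ∑ j, (k j * ‖fi‖ ^ 2 * ‖f j‖ ^ 2) • (sphInv (f j) - sphInv fi) = 0 := by
  have hterm : ∀ j, (k j * ‖fi‖ ^ 2 * ‖f j‖ ^ 2) • (sphInv (f j) - sphInv fi) =
      k j • (‖f j‖ ^ 2 • fi - ‖fi‖ ^ 2 • f j) := fun j => by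
    rw [mul_assoc, mul_smul, smul_sphInv_sub_sphInv]
  simp only [hterm]
  exact Finset.univ.sum_smul_smul_sub_smul_eq_zero k (fun j => ‖f j‖ ^ 2) _ f fi h1 h2

/-- If `∑ k_j (f_j − f_i) = 0` and `∑ k_j (‖f_j‖² − ‖f_i‖²) = 0`, then
`∑ k_j ‖f_i‖² ‖f_j‖² (f_j⁻¹ − f_i⁻¹) = 0`, where `x⁻¹ = −x/‖x‖²`. -/
theorem stmt_2 {J : Type*} [Fintype J]
    (fi : EuclideanSpace ℝ (Fin 3)) (f : J → EuclideanSpace ℝ (Fin 3))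
    (hfi : fi ≠ 0) (hf : ∀ j, f j ≠ 0) (k : J → ℝ)
    (h1 : ∑ j, k j • (f j - fi) = 0)
    (h2 : ∑ j, k j * (‖f j‖ ^ 2 - ‖fi‖ ^ 2) = 0) :
    ∑ j, (k j * ‖fi‖ ^ 2 * ‖f j‖ ^ 2) • (sphInv (f j) - sphInv fi) = 0 :=
  stmt_2_general fi f k h1 h2
end

section
/- Let J be a finite index set, let f_i ∈ ℝ³ and f_j ∈ ℝ³ for j ∈ J with ‖f_i‖ = 1 and ‖f_j‖ = 1 for all j ∈ J, and let k : J → ℝ. If ∑_{j∈J} k_j (f_j − f_i) = 0, then ∑_{j∈J} k_j ‖f_j − f_i‖² = 0. -/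
open scoped RealInnerProductSpace

/-- For a vertex star inscribed in the unit sphere, if
`∑ k_j (f_j − f_i) = 0` then `∑ k_j ‖f_j − f_i‖² = 0`. -/
theorem stmt_6 {J : Type*} [Fintype J]
    (fi : EuclideanSpace ℝ (Fin 3)) (f : J → EuclideanSpace ℝ (Fin 3))
    (hfi : ‖fi‖ = 1) (hf : ∀ j, ‖f j‖ = 1) (k : J → ℝ)
    (h : ∑ j, k j • (f j - fi) = 0) :
    ∑ j, k j * ‖f j - fi‖ ^ 2 = 0 := by
  have key : ∀ j, ‖f j - fi‖ ^ 2 = -2 * ⟪f j - fi, fi⟫ := by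
    intro j
    have := norm_sub_sq_real (f j) fi
    rw [hfi, hf j] at this
    rw [this, inner_sub_left, real_inner_self_eq_norm_sq, hfi]
    ring
  calc ∑ j, k j * ‖f j - fi‖ ^ 2
      = ∑ j, (-2) * ⟪k j • (f j - fi), fi⟫ := by
        refine Finset.sum_congr rfl fun j _ => ?_
        rw [key j, real_inner_smul_left]; ring
    _ = (-2) * ⟪∑ j, k j • (f j - fi), fi⟫ := by
        rw [sum_inner, Finset.mul_sum]
    _ = 0 := by rw [h, inner_zero_left, mul_zero]
end

section
/- Let a, b, c, d be purely imaginary quaternions with b ≠ a, c ≠ b, d ≠ c and d ≠ a, and let α, β ∈ ℝ with β ≠ 0. If the quaternionic cross-ratio satisfies q(a,b,c,d) = α/β (a real scalar), then α (b−a)/‖b−a‖² + β (c−b)/‖c−b‖² = β (d−a)/‖d−a‖² + α (c−d)/‖c−d‖². -/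
/-!
Write `u = b − a`, `v = c − b`, `w = c − d`, `z = d − a`, so that `u + v = w + z` and the
cross-ratio is `u v⁻¹ w z⁻¹ = r := α/β`. For a purely imaginary `x` we have
`x / ‖x‖² = −x⁻¹`, so the claim becomes `r u⁻¹ + v⁻¹ = z⁻¹ + r w⁻¹`. Since quaternion
conjugation reverses products and negates imaginary vectors, the reversed product
`z⁻¹ w v⁻¹ u` equals `r` as well. The two relations express `v⁻¹` and `z⁻¹` as
`r u⁻¹ z w⁻¹` and `r u⁻¹ v w⁻¹`, and both sides of the claim become `r u⁻¹ (u + v) w⁻¹`.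
-/

/-- The quaternionic cross-ratio `q(a,b,c,d) = (a−b)(b−c)⁻¹(c−d)(d−a)⁻¹`. -/
noncomputable def qcr (a b c d : Quaternion ℝ) : Quaternion ℝ :=
  (a - b) * (b - c)⁻¹ * (c - d) * (d - a)⁻¹

section DivisionRing

variable {K D : Type*} [Field K] [DivisionRing D] [Algebra K D]

theorem smul_inv_add_inv_eq_of_mul_inv_mul_mul_inv_eq_algebraMap {u v w z : D}
    (hu : u ≠ 0) (hv : v ≠ 0) (hw : w ≠ 0) (hz : z ≠ 0) (hsum : u + v = w + z) {r : K}
    (hq : u * v⁻¹ * w * z⁻¹ = algebraMap K D r)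
    (hq_rev : z⁻¹ * w * v⁻¹ * u = algebraMap K D r) :
    r • u⁻¹ + v⁻¹ = z⁻¹ + r • w⁻¹ := by
  have hv_inv : v⁻¹ = r • (u⁻¹ * z * w⁻¹) := by
    calc v⁻¹ = u⁻¹ * (u * v⁻¹ * w * z⁻¹) * z * w⁻¹ := by simp [mul_assoc, hu, hw, hz]
      _ = r • (u⁻¹ * z * w⁻¹) := by
        rw [hq, ← Algebra.commutes, ← Algebra.smul_def, smul_mul_assoc, smul_mul_assoc,
          mul_assoc]
  have hz_inv : z⁻¹ = r • (u⁻¹ * v * w⁻¹) := by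
    calc z⁻¹ = z⁻¹ * w * v⁻¹ * u * (u⁻¹ * v * w⁻¹) := by simp [mul_assoc, hu, hv, hw]
      _ = r • (u⁻¹ * v * w⁻¹) := by rw [hq_rev, ← Algebra.smul_def]
  calc r • u⁻¹ + v⁻¹ = r • (u⁻¹ * (w + z) * w⁻¹) := by
        rw [hv_inv, mul_add, add_mul, mul_inv_cancel_right₀ hw, smul_add]
    _ = r • (u⁻¹ * (v + u) * w⁻¹) := by rw [← hsum, add_comm u]
    _ = z⁻¹ + r • w⁻¹ := by
        rw [hz_inv, mul_add, add_mul, inv_mul_cancel₀ hu, one_mul, smul_add]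

end DivisionRing

namespace Quaternion

theorem div_norm_sq_smul_of_re_eq_zero {x : Quaternion ℝ} (hx : x.re = 0) (t : ℝ) :
    (t / ‖x‖ ^ 2) • x = -(t • x⁻¹) := by
  rw [inv_def, star_eq_neg.2 hx, normSq_eq_norm_mul_self, ← sq]
  simp [smul_smul, div_eq_mul_inv]

theorem star_mul_inv_mul_mul_inv_of_re_eq_zero {u v w z : Quaternion ℝ}
    (hu : u.re = 0) (hv : v.re = 0) (hw : w.re = 0) (hz : z.re = 0) :
    star (u * v⁻¹ * w * z⁻¹) = z⁻¹ * w * v⁻¹ * u := by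
  simp only [star_mul, star_inv₀, star_eq_neg.2 hu, star_eq_neg.2 hv, star_eq_neg.2 hw,
    star_eq_neg.2 hz, inv_neg, neg_mul, mul_neg, neg_neg, mul_assoc]

end Quaternion

/-- If an elementary quadrilateral of purely imaginary quaternions has
real factorized cross-ratio `α/β`, then
`α (b−a)/‖b−a‖² + β (c−b)/‖c−b‖² = β (d−a)/‖d−a‖² + α (c−d)/‖c−d‖²`
(closedness of the 1-form defining the Christoffel dual). -/
theorem stmt_8 (a b c d : Quaternion ℝ)
    (ha : a.re = 0) (hb : b.re = 0) (hc : c.re = 0) (hd : d.re = 0)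
    (hba : b ≠ a) (hcb : c ≠ b) (hdc : d ≠ c) (hda : d ≠ a)
    (α β : ℝ) (hβ : β ≠ 0)
    (hq : qcr a b c d = ((α / β : ℝ) : Quaternion ℝ)) :
    (α / ‖b - a‖ ^ 2) • (b - a) + (β / ‖c - b‖ ^ 2) • (c - b) =
      (β / ‖d - a‖ ^ 2) • (d - a) + (α / ‖c - d‖ ^ 2) • (c - d) := by
  have hre {x y : Quaternion ℝ} (hx : x.re = 0) (hy : y.re = 0) : (x - y).re = 0 := by
    simp [hx, hy]
  have hq' :
      (b - a) * (c - b)⁻¹ * (c - d) * (d - a)⁻¹ = algebraMap ℝ (Quaternion ℝ) (α / β) := by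
    rw [← neg_sub a b, ← neg_sub b c, inv_neg, neg_mul_neg]
    exact hq
  have hq_rev :
      (d - a)⁻¹ * (c - d) * (c - b)⁻¹ * (b - a) = algebraMap ℝ (Quaternion ℝ) (α / β) := by
    rw [← Quaternion.star_mul_inv_mul_mul_inv_of_re_eq_zero (hre hb ha) (hre hc hb) (hre hc hd)
      (hre hd ha), hq']
    exact Quaternion.star_coe _
  have key := smul_inv_add_inv_eq_of_mul_inv_mul_mul_inv_eq_algebraMap (sub_ne_zero.2 hba)
    (sub_ne_zero.2 hcb) (sub_ne_zero.2 hdc.symm) (sub_ne_zero.2 hda) (by abel) hq' hq_rev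
  rw [Quaternion.div_norm_sq_smul_of_re_eq_zero (hre hb ha),
    Quaternion.div_norm_sq_smul_of_re_eq_zero (hre hc hb),
    Quaternion.div_norm_sq_smul_of_re_eq_zero (hre hd ha),
    Quaternion.div_norm_sq_smul_of_re_eq_zero (hre hc hd), ← div_mul_cancel₀ α hβ]
  linear_combination (norm := module) -(β • key)
end

section
/- Let a, b, c, d be purely imaginary quaternions with b ≠ a, c ≠ b, d ≠ c, d ≠ a and c ≠ a, and let α, β ∈ ℝ with β ≠ 0. If the quaternionic cross-ratio satisfies q(a,b,c,d) = α/β (a real scalar), then α (b−a)/‖b−a‖² − β (d−a)/‖d−a‖² = (α − β)(c−a)/‖c−a‖². -/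
theorem smul_inv_sub_inv_eq_sub_one_smul_inv {K D : Type*} [CommRing K] [DivisionRing D]
    [Algebra K D] {x v w : D} {r : K} (hx : x ≠ 0) (hv : v ≠ 0) (hw : w ≠ 0) (hvx : v ≠ x)
    (h : x * (v - x)⁻¹ * (v - w) * w⁻¹ = algebraMap K D r) :
    r • x⁻¹ - w⁻¹ = (r - 1) • v⁻¹ := by
  have hvw : v - w = r • (v * x⁻¹ * w) - r • w := by
    calc v - w = (v - x) * x⁻¹ * (x * (v - x)⁻¹ * (v - w) * w⁻¹) * w := by
          simp [mul_assoc, hx, sub_ne_zero.2 hvx, hw]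
      _ = r • ((v - x) * x⁻¹ * w) := by
          rw [h, Algebra.smul_def, ← Algebra.commutes]
          simp only [mul_assoc]
      _ = r • (v * x⁻¹ * w) - r • w := by
          rw [sub_mul, mul_inv_cancel₀ hx, sub_mul, one_mul, smul_sub]
  apply mul_left_cancel₀ hv
  apply mul_right_cancel₀ hw
  calc v * (r • x⁻¹ - w⁻¹) * w = r • (v * x⁻¹ * w) - v := by
        simp [mul_sub, sub_mul, mul_assoc, hw]
    _ = (r - 1) • w := by linear_combination (norm := module) -hvw
    _ = v * ((r - 1) • v⁻¹) * w := by simp [hv]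

theorem qcr_eq_translated (a b c d : Quaternion ℝ) :
    qcr a b c d = (b - a) * ((c - a) - (b - a))⁻¹ * ((c - a) - (d - a)) * (d - a)⁻¹ := by
  rw [qcr, ← neg_sub b a, ← neg_sub c b, inv_neg, neg_mul_neg, sub_sub_sub_cancel_right,
    sub_sub_sub_cancel_right]

theorem Quaternion.smul_div_sq_norm_eq_neg_smul_inv {x : Quaternion ℝ} (hx : x.re = 0) (γ : ℝ) :
    (γ / ‖x‖ ^ 2) • x = -(γ • x⁻¹) := by
  rw [Quaternion.inv_def, Quaternion.star_eq_neg.2 hx, smul_neg, smul_neg, neg_neg, smul_smul,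
    div_eq_mul_inv, Quaternion.normSq_eq_norm_mul_self, pow_two]

theorem stmt_9_general (a b c d : Quaternion ℝ)
    (ha : a.re = 0) (hb : b.re = 0) (hc : c.re = 0) (hd : d.re = 0)
    (hba : b ≠ a) (hcb : c ≠ b) (hda : d ≠ a) (hca : c ≠ a)
    (α β : ℝ) (hβ : β ≠ 0)
    (hq : qcr a b c d = ((α / β : ℝ) : Quaternion ℝ)) :
    (α / ‖b - a‖ ^ 2) • (b - a) - (β / ‖d - a‖ ^ 2) • (d - a) =
      ((α - β) / ‖c - a‖ ^ 2) • (c - a) := by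
  obtain ⟨r, rfl⟩ : ∃ r, α = r * β := ⟨α / β, (div_mul_cancel₀ α hβ).symm⟩
  rw [mul_div_cancel_right₀ r hβ, qcr_eq_translated, ← Quaternion.algebraMap_def] at hq
  have key := smul_inv_sub_inv_eq_sub_one_smul_inv (sub_ne_zero.2 hba) (sub_ne_zero.2 hca)
    (sub_ne_zero.2 hda) (sub_left_injective.ne hcb) hq
  have re_sub_a {p : Quaternion ℝ} (hp : p.re = 0) : (p - a).re = 0 := by simp [hp, ha]
  rw [Quaternion.smul_div_sq_norm_eq_neg_smul_inv (re_sub_a hb),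
    Quaternion.smul_div_sq_norm_eq_neg_smul_inv (re_sub_a hd),
    Quaternion.smul_div_sq_norm_eq_neg_smul_inv (re_sub_a hc)]
  linear_combination (norm := module) (-β) • key

/-- If an elementary quadrilateral of purely imaginary quaternions has
real factorized cross-ratio `α/β`, then
`α (b−a)/‖b−a‖² − β (d−a)/‖d−a‖² = (α − β)(c−a)/‖c−a‖²` (first diagonal formula of
Lemma 5.3). -/
theorem stmt_9 (a b c d : Quaternion ℝ)
    (ha : a.re = 0) (hb : b.re = 0) (hc : c.re = 0) (hd : d.re = 0)
    (hba : b ≠ a) (hcb : c ≠ b) (hdc : d ≠ c) (hda : d ≠ a) (hca : c ≠ a)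
    (α β : ℝ) (hβ : β ≠ 0)
    (hq : qcr a b c d = ((α / β : ℝ) : Quaternion ℝ)) :
    (α / ‖b - a‖ ^ 2) • (b - a) - (β / ‖d - a‖ ^ 2) • (d - a) =
      ((α - β) / ‖c - a‖ ^ 2) • (c - a) :=
  stmt_9_general a b c d ha hb hc hd hba hcb hda hca α β hβ hq
end

section
/- Let a, b, c, d be purely imaginary quaternions with b ≠ a, c ≠ b, d ≠ c, d ≠ a and b ≠ d, and let α, β ∈ ℝ with β ≠ 0. If the quaternionic cross-ratio satisfies q(a,b,c,d) = α/β (a real scalar), then α (b−a)/‖b−a‖² + β (c−b)/‖c−b‖² = (α − β)(b−d)/‖b−d‖². -/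
theorem smul_inv_add_inv_eq_smul_inv_of_crossRatio {K D : Type*} [Field K] [DivisionRing D] [Algebra K D]
    {a b c d : D} {t : K} (hba : b ≠ a) (hcb : c ≠ b) (hda : d ≠ a) (hbd : b ≠ d)
    (h : (a - b) * (b - c)⁻¹ * (c - d) * (d - a)⁻¹ = algebraMap K D t) :
    t • (b - a)⁻¹ + (c - b)⁻¹ = (t - 1) • (b - d)⁻¹ := by
  have hu : b - a ≠ 0 := sub_ne_zero.2 hba
  have hv : c - b ≠ 0 := sub_ne_zero.2 hcb
  have hw : b - d ≠ 0 := sub_ne_zero.2 hbd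
  have h' : (b - a) * (c - b)⁻¹ * ((c - b) + (b - d)) = t • ((b - a) - (b - d)) := by
    rw [sub_sub_sub_cancel_left, sub_add_sub_cancel, Algebra.smul_def, ← h,
      inv_mul_cancel_right₀ (sub_ne_zero.2 hda), ← neg_sub b a, ← neg_sub c b, inv_neg, neg_mul_neg]
  set u := b - a
  set v := c - b
  set w := b - d
  rw [mul_add, inv_mul_cancel_right₀ hv, add_comm, ← eq_sub_iff_add_eq] at h'
  have hv' : v⁻¹ = t • (w⁻¹ - u⁻¹) - w⁻¹ := calc
    v⁻¹ = u⁻¹ * (u * v⁻¹ * w) * w⁻¹ := by simp [mul_assoc, hu, hw]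
    _ = t • (w⁻¹ - u⁻¹) - w⁻¹ := by
      simp only [h', mul_sub, sub_mul, mul_smul_comm, smul_mul_assoc, inv_mul_cancel₀ hu, one_mul,
        mul_inv_cancel_right₀ hw]
  rw [hv']
  module

namespace Quaternion

theorem inv_eq_neg_inv_sq_norm_smul_of_re_eq_zero {x : ℍ} (hx : x.re = 0) :
    x⁻¹ = -(‖x‖ ^ 2)⁻¹ • x := by
  rw [inv_def, star_eq_neg.2 hx, normSq_eq_norm_mul_self, ← sq, smul_neg, neg_smul]

theorem div_sq_norm_smul_eq_neg_smul_inv_of_re_eq_zero {x : ℍ} (hx : x.re = 0) (r : ℝ) :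
    (r / ‖x‖ ^ 2) • x = -(r • x⁻¹) := by
  rw [inv_eq_neg_inv_sq_norm_smul_of_re_eq_zero hx, smul_smul, mul_neg, neg_smul, neg_neg,
    div_eq_mul_inv]

end Quaternion

theorem stmt_10_general (a b c d : Quaternion ℝ)
    (ha : a.re = 0) (hb : b.re = 0) (hc : c.re = 0) (hd : d.re = 0)
    (hba : b ≠ a) (hcb : c ≠ b) (hda : d ≠ a) (hbd : b ≠ d)
    (α β : ℝ) (hβ : β ≠ 0)
    (hq : qcr a b c d = ((α / β : ℝ) : Quaternion ℝ)) :
    (α / ‖b - a‖ ^ 2) • (b - a) + (β / ‖c - b‖ ^ 2) • (c - b) =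
      ((α - β) / ‖b - d‖ ^ 2) • (b - d) := by
  rw [Quaternion.div_sq_norm_smul_eq_neg_smul_inv_of_re_eq_zero (by simp [ha, hb]),
    Quaternion.div_sq_norm_smul_eq_neg_smul_inv_of_re_eq_zero (by simp [hb, hc]),
    Quaternion.div_sq_norm_smul_eq_neg_smul_inv_of_re_eq_zero (by simp [hb, hd])]
  have hedges := smul_inv_add_inv_eq_smul_inv_of_crossRatio hba hcb hda hbd
    (by rwa [qcr, ← Quaternion.algebraMap_def] at hq)
  calc -(α • (b - a)⁻¹) + -(β • (c - b)⁻¹) = -(β • ((α / β) • (b - a)⁻¹ + (c - b)⁻¹)) := by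
        rw [smul_add, smul_smul, mul_div_cancel₀ _ hβ, neg_add]
    _ = -((α - β) • (b - d)⁻¹) := by
        rw [hedges, smul_smul, mul_sub, mul_div_cancel₀ _ hβ, mul_one]

/-- If an elementary quadrilateral of purely imaginary quaternions has
real factorized cross-ratio `α/β`, then
`α (b−a)/‖b−a‖² + β (c−b)/‖c−b‖² = (α − β)(b−d)/‖b−d‖²` (second diagonal formula of
Lemma 5.3). -/
theorem stmt_10 (a b c d : Quaternion ℝ)
    (ha : a.re = 0) (hb : b.re = 0) (hc : c.re = 0) (hd : d.re = 0)
    (hba : b ≠ a) (hcb : c ≠ b) (hdc : d ≠ c) (hda : d ≠ a) (hbd : b ≠ d)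
    (α β : ℝ) (hβ : β ≠ 0)
    (hq : qcr a b c d = ((α / β : ℝ) : Quaternion ℝ)) :
    (α / ‖b - a‖ ^ 2) • (b - a) + (β / ‖c - b‖ ^ 2) • (c - b) =
      ((α - β) / ‖b - d‖ ^ 2) • (b - d) :=
  stmt_10_general a b c d ha hb hc hd hba hcb hda hbd α β hβ hq
end

section
/- Let N ∈ ℝ³ be a unit vector, and let f_i, f_j, f_k ∈ ℝ³ satisfy ⟨f_j − f_i, N⟩ = 0 and ⟨f_k − f_i, N⟩ = 0. Assume the signed area A := ⟨(f_j − f_i) × (f_k − f_i), N⟩ / 2 is nonzero, and let u_i, u_j, u_k ∈ ℝ. Define Z := −(u_i (f_k − f_j) + u_j (f_i − f_k) + u_k (f_j − f_i)) / (2A). Then (f_j − f_i) × Z = (u_j − u_i) N, (f_k − f_j) × Z = (u_k − u_j) N, and (f_i − f_k) × Z = (u_i − u_k) N. -/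
/-!
Put `W = u_i (f_k - f_j) + u_j (f_i - f_k) + u_k (f_j - f_i)`. A bilinear computation, valid over
any commutative ring, gives `e × W = -(du(e)) D` for every edge `e` of the triangle, where
`D = (f_j - f_i) × (f_k - f_i)`. Both edge vectors are orthogonal to the unit vector `N`, so the
vector triple product expansion forces `D = ⟨D, N⟩ N = 2A N`, and dividing by `-2A` gives the
claim.
-/

open scoped RealInnerProductSpace

open Matrix WithLp

theorem ofLp_cross (x y : EuclideanSpace ℝ (Fin 3)) :
    ofLp (cross x y) = ofLp x ⨯₃ ofLp y := by
  rw [cross_apply]; rfl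

section CrossProduct

variable {R : Type*} [CommRing R]

theorem crossProduct_eq_dotProduct_smul_of_orthogonal {a b n : Fin 3 → R}
    (hn : n ⬝ᵥ n = 1) (ha : a ⬝ᵥ n = 0) (hb : b ⬝ᵥ n = 0) :
    a ⨯₃ b = (a ⨯₃ b ⬝ᵥ n) • n := by
  have h₁ : n ⨯₃ (a ⨯₃ b) = 0 := by
    rw [cross_cross_eq_smul_sub_smul', dotProduct_comm n b, hb, ha]
    simp
  have h₂ := cross_cross_eq_smul_sub_smul' n n (a ⨯₃ b)
  rw [h₁, LinearMap.map_zero, hn, one_smul, dotProduct_comm] at h₂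
  exact (sub_eq_zero.mp h₂.symm).symm

theorem crossProduct_edges_weightedSum (p q r : Fin 3 → R) (up uq ur : R) :
    let W := up • (r - q) + uq • (p - r) + ur • (q - p)
    (q - p) ⨯₃ W = (up - uq) • ((q - p) ⨯₃ (r - p)) ∧
    (r - q) ⨯₃ W = (uq - ur) • ((q - p) ⨯₃ (r - p)) ∧
    (p - r) ⨯₃ W = (ur - up) • ((q - p) ⨯₃ (r - p)) := by
  refine ⟨?_, ?_, ?_⟩ <;>
  · ext i
    fin_cases i <;>
    · simp only [map_sub, map_add, map_smul, LinearMap.sub_apply, cross_apply, Pi.add_apply,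
        Pi.smul_apply, Pi.sub_apply, smul_eq_mul, Fin.isValue, Fin.reduceFinMk, Fin.zero_eta,
        Fin.mk_one, cons_val, cons_val_zero, cons_val_one, Nat.succ_eq_add_one, Nat.reduceAdd]
      ring

theorem crossProduct_edges_eq_of_crossProduct_eq_smul {K : Type*} [Field K] {p q r n : Fin 3 → K}
    {s : K} (hs : s ≠ 0) (hD : (q - p) ⨯₃ (r - p) = s • n) (up uq ur : K) :
    let Z := -(1 / s) • (up • (r - q) + uq • (p - r) + ur • (q - p))
    (q - p) ⨯₃ Z = (uq - up) • n ∧ (r - q) ⨯₃ Z = (ur - uq) • n ∧ (p - r) ⨯₃ Z = (up - ur) • n := by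
  obtain ⟨h₁, h₂, h₃⟩ := crossProduct_edges_weightedSum p q r up uq ur
  have hscale : ∀ c : K, -(1 / s) • (c • (s • n)) = -c • n := fun c => by
    rw [smul_smul, smul_smul]
    congr 1
    field_simp
  simp only [LinearMap.map_smul, h₁, h₂, h₃, hD, hscale, neg_sub, and_self]

end CrossProduct

theorem real_inner_eq_dotProduct (x y : EuclideanSpace ℝ (Fin 3)) :
    ⟪x, y⟫ = ofLp x ⬝ᵥ ofLp y := by
  rw [EuclideanSpace.inner_eq_star_dotProduct, star_trivial, dotProduct_comm]

/-- For a non-degenerate planar triangle `(f_i, f_j, f_k)` with unit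
normal `N` and signed area `A`, the angular velocity vector
`Z = −(u_i (f_k − f_j) + u_j (f_i − f_k) + u_k (f_j − f_i))/(2A)` realizes the
infinitesimal normal deformation `u N` on the edges:
`df(e) × Z = (du(e)) N` on all three edges. -/
theorem stmt_12 (N fi fj fk : EuclideanSpace ℝ (Fin 3)) (hN : ‖N‖ = 1)
    (hj : ⟪fj - fi, N⟫ = 0) (hk : ⟪fk - fi, N⟫ = 0)
    (A : ℝ) (hA : A = ⟪cross (fj - fi) (fk - fi), N⟫ / 2) (hA0 : A ≠ 0)
    (ui uj uk : ℝ) (Z : EuclideanSpace ℝ (Fin 3))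
    (hZ : Z = -(1 / (2 * A)) • (ui • (fk - fj) + uj • (fi - fk) + uk • (fj - fi))) :
    cross (fj - fi) Z = (uj - ui) • N ∧
    cross (fk - fj) Z = (uk - uj) • N ∧
    cross (fi - fk) Z = (ui - uk) • N := by
  have hNN : ofLp N ⬝ᵥ ofLp N = 1 := by
    rw [← real_inner_eq_dotProduct, real_inner_self_eq_norm_sq, hN, one_pow]
  rw [real_inner_eq_dotProduct, ofLp_sub] at hj hk
  rw [real_inner_eq_dotProduct, ofLp_cross, ofLp_sub, ofLp_sub] at hA
  have hD : (ofLp fj - ofLp fi) ⨯₃ (ofLp fk - ofLp fi) = (2 * A) • ofLp N := by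
    rw [crossProduct_eq_dotProduct_smul_of_orthogonal hNN hj hk, hA, mul_div_cancel₀ _ two_ne_zero]
  obtain ⟨h₁, h₂, h₃⟩ := crossProduct_edges_eq_of_crossProduct_eq_smul
    (mul_ne_zero two_ne_zero hA0) hD ui uj uk
  simp only [← ofLp_sub, ← ofLp_smul, ← ofLp_add, ← hZ, ← ofLp_cross] at h₁ h₂ h₃
  exact ⟨ofLp_injective 2 h₁, ofLp_injective 2 h₂, ofLp_injective 2 h₃⟩
end

section
/- Let N ∈ ℝ³ be a unit vector, and let f_i, f_j, f_k ∈ ℝ³ satisfy ⟨f_j − f_i, N⟩ = 0 and ⟨f_k − f_i, N⟩ = 0. Assume the signed area A := ⟨(f_j − f_i) × (f_k − f_i), N⟩ / 2 is nonzero, and let u_i, u_j, u_k ∈ ℝ. Define Z := −(u_i (f_k − f_j) + u_j (f_i − f_k) + u_k (f_j − f_i)) / (2A), and define the cotangents cot_k := ⟨f_i − f_k, f_j − f_k⟩ / (2A) and cot_j := ⟨f_k − f_j, f_i − f_j⟩ / (2A). Then ⟨f_j − f_k, Z⟩ = −cot_k (u_j − u_i) − cot_j (u_k − u_i). -/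
open scoped RealInnerProductSpace

/-- For a non-degenerate planar triangle `(f_i, f_j, f_k)` with unit
normal `N`, signed area `A`, cotangents `cot_k = ⟨f_i − f_k, f_j − f_k⟩/(2A)` and
`cot_j = ⟨f_k − f_j, f_i − f_j⟩/(2A)`, and angular velocity
`Z = −(u_i (f_k − f_j) + u_j (f_i − f_k) + u_k (f_j − f_i))/(2A)`, one has
`⟨f_j − f_k, Z⟩ = −cot_k (u_j − u_i) − cot_j (u_k − u_i)`. -/
theorem stmt_13 (N fi fj fk : EuclideanSpace ℝ (Fin 3)) (hN : ‖N‖ = 1)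
    (hj : ⟪fj - fi, N⟫ = 0) (hk : ⟪fk - fi, N⟫ = 0)
    (A : ℝ) (hA : A = ⟪cross (fj - fi) (fk - fi), N⟫ / 2) (hA0 : A ≠ 0)
    (ui uj uk : ℝ) (Z : EuclideanSpace ℝ (Fin 3))
    (hZ : Z = -(1 / (2 * A)) • (ui • (fk - fj) + uj • (fi - fk) + uk • (fj - fi)))
    (cotk cotj : ℝ)
    (hcotk : cotk = ⟪fi - fk, fj - fk⟫ / (2 * A))
    (hcotj : cotj = ⟪fk - fj, fi - fj⟫ / (2 * A)) :
    ⟪fj - fk, Z⟫ = -cotk * (uj - ui) - cotj * (uk - ui) := by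
  subst hZ hcotk hcotj
  simp only [PiLp.inner_apply, RCLike.inner_apply, conj_trivial, PiLp.sub_apply,
    PiLp.smul_apply, PiLp.add_apply, PiLp.neg_apply, smul_eq_mul, Fin.sum_univ_three]
  field_simp
  ring
end

section
/- Let n ≥ 3, let N ∈ ℝ³ be a unit vector, let f_c ∈ ℝ³, and let f : ℤ/nℤ → ℝ³ satisfy ⟨f_j − f_c, N⟩ = 0 for all j. Assume each signed area A_j := ⟨(f_j − f_c) × (f_{j+1} − f_c), N⟩ / 2 is nonzero. Let u_c ∈ ℝ and u : ℤ/nℤ → ℝ, and for each j define Z_j := −(u_c (f_{j+1} − f_j) + u_j (f_c − f_{j+1}) + u_{j+1} (f_j − f_c)) / (2A_j). Then ∑_{j∈ℤ/nℤ} ⟨f_j − f_{j+1}, Z_j⟩ = −∑_{j∈ℤ/nℤ} ( ⟨f_c − f_{j+1}, f_j − f_{j+1}⟩/(2A_j) + ⟨f_c − f_{j−1}, f_j − f_{j−1}⟩/(2A_{j−1}) ) (u_j − u_c). In particular, the left-hand side vanishes if and only if ∑_{j∈ℤ/nℤ} (cot β_j + cot β'_j)(u_j − u_c) = 0, where cot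 β_j and cot β'_j denote the two cotangent weights ⟨f_c − f_{j+1}, f_j − f_{j+1}⟩/(2A_j) and ⟨f_c − f_{j−1}, f_j − f_{j−1}⟩/(2A_{j−1}) of the edge {c, j}. -/
open scoped RealInnerProductSpace

/-- For the star of an interior vertex `c` of a planar triangular mesh,
with neighbors `f_j` (`j ∈ ℤ/nℤ`) in cyclic order, nonzero signed areas `A_j`, and
face angular velocities `Z_j` of the infinitesimal normal deformation `u N`, the
change of the integrated mean curvature at `c` equals minus the cotangent-Laplacian
expression; in particular it vanishes iff `∑ (cot β_j + cot β'_j)(u_j − u_c) = 0`. -/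
theorem stmt_14 (n : ℕ) (hn : 3 ≤ n) [NeZero n]
    (N : EuclideanSpace ℝ (Fin 3)) (hN : ‖N‖ = 1)
    (fc : EuclideanSpace ℝ (Fin 3)) (f : ZMod n → EuclideanSpace ℝ (Fin 3))
    (hplanar : ∀ j, ⟪f j - fc, N⟫ = 0)
    (A : ZMod n → ℝ)
    (hA : ∀ j, A j = ⟪cross (f j - fc) (f (j + 1) - fc), N⟫ / 2)
    (hA0 : ∀ j, A j ≠ 0)
    (uc : ℝ) (u : ZMod n → ℝ) (Z : ZMod n → EuclideanSpace ℝ (Fin 3))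
    (hZ : ∀ j, Z j = -(1 / (2 * A j)) •
      (uc • (f (j + 1) - f j) + u j • (fc - f (j + 1)) + u (j + 1) • (f j - fc))) :
    (∑ j, ⟪f j - f (j + 1), Z j⟫ =
      -∑ j, (⟪fc - f (j + 1), f j - f (j + 1)⟫ / (2 * A j) +
             ⟪fc - f (j - 1), f j - f (j - 1)⟫ / (2 * A (j - 1))) * (u j - uc)) ∧
    ((∑ j, ⟪f j - f (j + 1), Z j⟫ = 0) ↔
      ∑ j, (⟪fc - f (j + 1), f j - f (j + 1)⟫ / (2 * A j) +
            ⟪fc - f (j - 1), f j - f (j - 1)⟫ / (2 * A (j - 1))) * (u j - uc) = 0) := by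
  have key : ∀ j : ZMod n, ⟪f j - f (j + 1), Z j⟫ =
      -(⟪fc - f (j + 1), f j - f (j + 1)⟫ / (2 * A j)) * (u j - uc) +
      -(⟪fc - f j, f (j + 1) - f j⟫ / (2 * A j)) * (u (j + 1) - uc) := by
    intro j
    rw [hZ j]
    simp only [inner_smul_right, inner_add_right, inner_sub_left, inner_sub_right,
      inner_neg_right, real_inner_smul_right, real_inner_comm (f j) (f (j + 1)),
      real_inner_comm fc (f j), real_inner_comm fc (f (j + 1))]
    ring
  have reidx : (∑ j : ZMod n, -(⟪fc - f j, f (j + 1) - f j⟫ / (2 * A j)) * (u (j + 1) - uc)) =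
      ∑ j : ZMod n, -(⟪fc - f (j - 1), f j - f (j - 1)⟫ / (2 * A (j - 1))) * (u j - uc) := by
    apply Fintype.sum_equiv (Equiv.addRight (1 : ZMod n))
    intro j
    simp [Equiv.addRight, add_sub_cancel_right]
  have main : (∑ j : ZMod n, ⟪f j - f (j + 1), Z j⟫) =
      -∑ j : ZMod n, (⟪fc - f (j + 1), f j - f (j + 1)⟫ / (2 * A j) +
             ⟪fc - f (j - 1), f j - f (j - 1)⟫ / (2 * A (j - 1))) * (u j - uc) := by
    calc (∑ j : ZMod n, ⟪f j - f (j + 1), Z j⟫)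
        = ∑ j : ZMod n, (-(⟪fc - f (j + 1), f j - f (j + 1)⟫ / (2 * A j)) * (u j - uc) +
            -(⟪fc - f j, f (j + 1) - f j⟫ / (2 * A j)) * (u (j + 1) - uc)) :=
          Finset.sum_congr rfl fun j _ => key j
      _ = (∑ j : ZMod n, -(⟪fc - f (j + 1), f j - f (j + 1)⟫ / (2 * A j)) * (u j - uc)) +
          ∑ j : ZMod n, -(⟪fc - f j, f (j + 1) - f j⟫ / (2 * A j)) * (u (j + 1) - uc) :=
          Finset.sum_add_distrib
      _ = (∑ j : ZMod n, -(⟪fc - f (j + 1), f j - f (j + 1)⟫ / (2 * A j)) * (u j - uc)) +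
          ∑ j : ZMod n, -(⟪fc - f (j - 1), f j - f (j - 1)⟫ / (2 * A (j - 1))) * (u j - uc) := by
          rw [reidx]
      _ = -∑ j : ZMod n, (⟪fc - f (j + 1), f j - f (j + 1)⟫ / (2 * A j) +
            ⟪fc - f (j - 1), f j - f (j - 1)⟫ / (2 * A (j - 1))) * (u j - uc) := by
          rw [← Finset.sum_add_distrib, ← Finset.sum_neg_distrib]
          exact Finset.sum_congr rfl fun j _ => by ring
  exact ⟨main, by rw [main, neg_eq_zero]⟩
end

section
/- Let N ∈ ℝ³ be a unit vector, d ∈ ℝ, V a finite index set, f : V → ℝ³ with ⟨f_i, N⟩ = d for all i ∈ V, and u : V → ℝ. Then there exist v, w ∈ ℝ³ such that u_i N = v + w × f_i for all i ∈ V if and only if there exist a ∈ ℝ³ with ⟨a, N⟩ = 0 and c ∈ ℝ such that u_i = ⟨a, f_i⟩ + c for all i ∈ V. -/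
/-!
Pairing `u i • N = v + w × f i` with the unit normal gives `u i = ⟪v, N⟫ + ⟪N × w, f i⟫`,
an affine function with gradient `N × w ⊥ N`. Conversely, on the plane `⟪x, N⟫ = d` the
expansion `(a × N) × x = ⟪a, x⟫ N - d a` shows that `⟪a, x⟫ N` is the velocity of the motion
with angular velocity `a × N` and translation `d a`.
-/

open scoped RealInnerProductSpace

open WithLp Matrix

namespace EuclideanSpace

lemma cross_eq_crossProduct (x y : EuclideanSpace ℝ (Fin 3)) :
    cross x y = toLp 2 (ofLp x ⨯₃ ofLp y) := by
  rw [cross_apply]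
  rfl

lemma real_inner_eq_dotProduct {ι : Type*} [Fintype ι]
    (x y : EuclideanSpace ℝ ι) : ⟪x, y⟫ = ofLp x ⬝ᵥ ofLp y := by
  rw [inner_eq_star_dotProduct, star_trivial, dotProduct_comm]

lemma inner_cross_self_left (n w : EuclideanSpace ℝ (Fin 3)) : ⟪cross n w, n⟫ = 0 := by
  rw [real_inner_comm, real_inner_eq_dotProduct, cross_eq_crossProduct]
  exact dot_self_cross _ _

lemma inner_cross_eq_inner_cross (w x n : EuclideanSpace ℝ (Fin 3)) :
    ⟪cross w x, n⟫ = ⟪cross n w, x⟫ := by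
  rw [real_inner_comm, real_inner_comm x]
  simp only [real_inner_eq_dotProduct, cross_eq_crossProduct]
  rw [triple_product_permutation, triple_product_permutation]

lemma cross_cross_eq_smul_sub_smul (a b c : EuclideanSpace ℝ (Fin 3)) :
    cross (cross a b) c = ⟪a, c⟫ • b - ⟪b, c⟫ • a := by
  simp only [cross_eq_crossProduct, real_inner_eq_dotProduct]
  rw [_root_.cross_cross_eq_smul_sub_smul]
  rfl

end EuclideanSpace

open EuclideanSpace

theorem stmt_15_general (N : EuclideanSpace ℝ (Fin 3)) (hN : ‖N‖ = 1) (d : ℝ)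
    {V : Type*} (f : V → EuclideanSpace ℝ (Fin 3))
    (hf : ∀ i, ⟪f i, N⟫ = d) (u : V → ℝ) :
    (∃ v w : EuclideanSpace ℝ (Fin 3), ∀ i, u i • N = v + cross w (f i)) ↔
    (∃ a : EuclideanSpace ℝ (Fin 3), ⟪a, N⟫ = 0 ∧
      ∃ c : ℝ, ∀ i, u i = ⟪a, f i⟫ + c) := by
  constructor
  · rintro ⟨v, w, h⟩
    have hNN : ⟪N, N⟫ = 1 := by rw [real_inner_self_eq_norm_sq, hN, one_pow]
    refine ⟨cross N w, inner_cross_self_left N w, ⟪v, N⟫, fun i => ?_⟩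
    calc u i = ⟪u i • N, N⟫ := by rw [real_inner_smul_left, hNN, mul_one]
      _ = ⟪v, N⟫ + ⟪cross N w, f i⟫ := by
        rw [h i, inner_add_left, inner_cross_eq_inner_cross]
      _ = ⟪cross N w, f i⟫ + ⟪v, N⟫ := add_comm _ _
  · rintro ⟨a, -, c, h⟩
    refine ⟨c • N + d • a, cross a N, fun i => ?_⟩
    rw [cross_cross_eq_smul_sub_smul, real_inner_comm (f i) N, hf i, h i]
    module

/-- For a planar mesh `f : V → ℝ³` lying in the plane `⟨x, N⟩ = d`, the
normal deformation `u N` is induced by an infinitesimal Euclidean motion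
`x ↦ v + w × x` iff `u` is an affine function `u = ⟨a, f⟩ + c` with `a ⊥ N`. -/
theorem stmt_15 (N : EuclideanSpace ℝ (Fin 3)) (hN : ‖N‖ = 1) (d : ℝ)
    {V : Type*} [Fintype V] (f : V → EuclideanSpace ℝ (Fin 3))
    (hf : ∀ i, ⟪f i, N⟫ = d) (u : V → ℝ) :
    (∃ v w : EuclideanSpace ℝ (Fin 3), ∀ i, u i • N = v + cross w (f i)) ↔
    (∃ a : EuclideanSpace ℝ (Fin 3), ⟪a, N⟫ = 0 ∧
      ∃ c : ℝ, ∀ i, u i = ⟪a, f i⟫ + c) :=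
  stmt_15_general N hN d f hf u
end

section
/- Let n ≥ 2, let f_c ∈ ℝ³ and f : ℤ/nℤ → ℝ³ satisfy ‖f_c‖ = 1 and ‖f_j‖ = 1 for all j, let Z : ℤ/nℤ → ℝ³ and k : ℤ/nℤ → ℝ, and suppose Z_j − Z_{j−1} = k_j (f_j − f_c) for all j ∈ ℤ/nℤ. Then ∑_{j∈ℤ/nℤ} ⟨f_j − f_c, Z_j − Z_{j−1}⟩ = 0. -/
open scoped RealInnerProductSpace

/-- For the star of an interior vertex `c` of a triangulated surface
inscribed in the unit sphere, an infinitesimal isometric deformation with face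
angular velocities `Z_j` satisfying the edge compatibility
`Z_j − Z_{j−1} = k_j (f_j − f_c)` preserves the integrated mean curvature at `c`:
`∑ ⟨f_j − f_c, Z_j − Z_{j−1}⟩ = 0`. -/
theorem stmt_16 (n : ℕ) (hn : 2 ≤ n) [NeZero n]
    (fc : EuclideanSpace ℝ (Fin 3)) (f : ZMod n → EuclideanSpace ℝ (Fin 3))
    (hfc : ‖fc‖ = 1) (hf : ∀ j, ‖f j‖ = 1)
    (Z : ZMod n → EuclideanSpace ℝ (Fin 3)) (k : ZMod n → ℝ)
    (hZ : ∀ j, Z j - Z (j - 1) = k j • (f j - fc)) :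
    ∑ j, ⟪f j - fc, Z j - Z (j - 1)⟫ = 0 := by
  have hsum : ∑ j, (Z j - Z (j - 1)) = 0 := by
    rw [Finset.sum_sub_distrib]
    rw [sub_eq_zero]
    exact (Fintype.sum_equiv (Equiv.subRight (1 : ZMod n)) _ _ (fun j => rfl)).symm
  have hterm : ∀ j, ⟪f j - fc, Z j - Z (j - 1)⟫ = -2 * ⟪fc, Z j - Z (j - 1)⟫ := by
    intro j
    have h0 : ⟪f j + fc, Z j - Z (j - 1)⟫ = 0 := by
      rw [hZ j, real_inner_smul_right]
      have : ⟪f j + fc, f j - fc⟫ = ‖f j‖ ^ 2 - ‖fc‖ ^ 2 := by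
        rw [inner_sub_right, inner_add_left, inner_add_left,
          real_inner_self_eq_norm_sq, real_inner_self_eq_norm_sq,
          real_inner_comm fc (f j)]
        ring
      rw [this, hf j, hfc]
      ring
    have : ⟪f j - fc, Z j - Z (j - 1)⟫
        = ⟪f j + fc, Z j - Z (j - 1)⟫ - 2 * ⟪fc, Z j - Z (j - 1)⟫ := by
      rw [inner_sub_left, inner_add_left]; ring
    rw [this, h0]; ring
  calc ∑ j, ⟪f j - fc, Z j - Z (j - 1)⟫
      = ∑ j, -2 * ⟪fc, Z j - Z (j - 1)⟫ := Finset.sum_congr rfl (fun j _ => hterm j)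
    _ = -2 * ⟪fc, ∑ j, (Z j - Z (j - 1))⟫ := by
        rw [inner_sum, Finset.mul_sum]
    _ = 0 := by rw [hsum, inner_zero_right, mul_zero]
end
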